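/- Let 1/2 < γ < 1. Define h_γ(t) = (sin(γπ)/π) · (γ/(1−γ)) · t^γ / [(1−t)^{2γ} + t^{2γ} − 2 t^γ (1−t)^γ cos(γπ)] for 0 < t < 1, and H_γ(x) = ∫₀ˣ (x−t)^{γ−1} h_γ′(t) dt for 0 < x < 1. Then for every x in (0,1), the derivative of H_γ at x equals (1/x) ∫₀ˣ (x−t)^{γ−1} [γ h_γ′(t) + t h_γ″(t)] dt, where h_γ′ and h_γ″ denote the first and second derivatives of h_γ. -/

import Mathlib

open MeasureTheory Real Set Filter

/-- The function `h_γ` from Yano--Yano. -/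
noncomputable def hDens (γ t : ℝ) : ℝ :=
  (Real.sin (γ * Real.pi) / Real.pi) * (γ / (1 - γ)) * t ^ γ /
    ((1 - t) ^ (2 * γ) + t ^ (2 * γ)
      - 2 * t ^ γ * (1 - t) ^ γ * Real.cos (γ * Real.pi))

/-- The distribution function `H_γ`. -/
noncomputable def HDist (γ x : ℝ) : ℝ :=
  ∫ t in (0:ℝ)..x, (x - t) ^ (γ - 1) * deriv (hDens γ) t

namespace YY

noncomputable def cc (γ : ℝ) : ℝ := Real.sin (γ * Real.pi) / Real.pi * (γ / (1 - γ))

noncomputable def D (γ t : ℝ) : ℝ :=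
  (1 - t) ^ (2 * γ) + t ^ (2 * γ) - 2 * t ^ γ * (1 - t) ^ γ * Real.cos (γ * Real.pi)

noncomputable def D1 (γ t : ℝ) : ℝ :=
  -(2 * γ * (1 - t) ^ (2 * γ - 1)) + 2 * γ * t ^ (2 * γ - 1)
    - 2 * γ * Real.cos (γ * Real.pi) * (t ^ (γ - 1) * (1 - t) ^ γ - t ^ γ * (1 - t) ^ (γ - 1))

noncomputable def D2 (γ t : ℝ) : ℝ :=
  2 * γ * (2 * γ - 1) * (1 - t) ^ (2 * γ - 2) + 2 * γ * (2 * γ - 1) * t ^ (2 * γ - 2)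
    - 2 * γ * Real.cos (γ * Real.pi) *
      ((γ - 1) * t ^ (γ - 2) * (1 - t) ^ γ - γ * t ^ (γ - 1) * (1 - t) ^ (γ - 1)
        - (γ * t ^ (γ - 1) * (1 - t) ^ (γ - 1) - (γ - 1) * t ^ γ * (1 - t) ^ (γ - 2)))

noncomputable def h1 (γ t : ℝ) : ℝ :=
  (cc γ * (γ * t ^ (γ - 1)) * D γ t - cc γ * t ^ γ * D1 γ t) / (D γ t) ^ 2

noncomputable def h2 (γ t : ℝ) : ℝ :=
  ((cc γ * (γ * ((γ - 1) * t ^ (γ - 2))) * D γ t - cc γ * t ^ γ * D2 γ t) * (D γ t) ^ 2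
      - (cc γ * (γ * t ^ (γ - 1)) * D γ t - cc γ * t ^ γ * D1 γ t) * (2 * D γ t * D1 γ t))
    / ((D γ t) ^ 2) ^ 2

lemma hDens_eq (γ : ℝ) : hDens γ = fun t => cc γ * t ^ γ / D γ t := rfl

lemma hasDerivAt_one_sub_rpow {b t : ℝ} (ht : t < 1) :
    HasDerivAt (fun u : ℝ => (1 - u) ^ b) (-(b * (1 - t) ^ (b - 1))) t := by
  have h0 : HasDerivAt (fun u : ℝ => 1 - u) (-1) t := by
    simpa using (hasDerivAt_id t).const_sub 1
  have h2 := (Real.hasDerivAt_rpow_const (p := b)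
    (Or.inl (by intro h; nlinarith [h] : (1:ℝ) - t ≠ 0))).comp t h0
  refine h2.congr_deriv ?_
  ring

lemma hasDerivAt_D {γ t : ℝ} (ht : t ∈ Set.Ioo (0:ℝ) 1) :
    HasDerivAt (D γ) (D1 γ t) t := by
  obtain ⟨ht0, ht1⟩ := ht
  have hA := hasDerivAt_one_sub_rpow (b := 2*γ) ht1
  have hB := Real.hasDerivAt_rpow_const (x := t) (p := 2*γ) (Or.inl ht0.ne')
  have hC1 := Real.hasDerivAt_rpow_const (x := t) (p := γ) (Or.inl ht0.ne')
  have hC2 := hasDerivAt_one_sub_rpow (b := γ) ht1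
  have hC := (((hC1.const_mul 2).mul hC2).mul_const (Real.cos (γ * Real.pi)))
  have := (hA.add hB).sub hC
  refine this.congr_deriv ?_
  unfold D1
  ring

lemma hasDerivAt_D1 {γ t : ℝ} (ht : t ∈ Set.Ioo (0:ℝ) 1) :
    HasDerivAt (D1 γ) (D2 γ t) t := by
  obtain ⟨ht0, ht1⟩ := ht
  have hA := ((hasDerivAt_one_sub_rpow (b := 2*γ-1) ht1).const_mul (2*γ)).neg
  have hB := (Real.hasDerivAt_rpow_const (x := t) (p := 2*γ-1) (Or.inl ht0.ne')).const_mul (2*γ)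
  have hc1 := (Real.hasDerivAt_rpow_const (x := t) (p := γ-1) (Or.inl ht0.ne')).mul
    (hasDerivAt_one_sub_rpow (b := γ) ht1)
  have hc2 := (Real.hasDerivAt_rpow_const (x := t) (p := γ) (Or.inl ht0.ne')).mul
    (hasDerivAt_one_sub_rpow (b := γ-1) ht1)
  have hC := (hc1.sub hc2).const_mul (2 * γ * Real.cos (γ * Real.pi))
  have := (hA.add hB).sub hC
  refine this.congr_deriv ?_
  unfold D2
  rw [show 2*γ - 2 = 2*γ - 1 - 1 by ring, show γ - 2 = γ - 1 - 1 by ring]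
  ring

lemma hasDerivAt_hDens {γ t : ℝ} (hD : D γ t ≠ 0) (ht : t ∈ Set.Ioo (0:ℝ) 1) :
    HasDerivAt (hDens γ) (h1 γ t) t := by
  have hN : HasDerivAt (fun u : ℝ => cc γ * u ^ γ) (cc γ * (γ * t ^ (γ - 1))) t :=
    (Real.hasDerivAt_rpow_const (Or.inl ht.1.ne')).const_mul (cc γ)
  have := hN.div (hasDerivAt_D ht) hD
  rw [hDens_eq]
  exact this

lemma hasDerivAt_h1 {γ t : ℝ} (hD : D γ t ≠ 0) (ht : t ∈ Set.Ioo (0:ℝ) 1) :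
    HasDerivAt (h1 γ) (h2 γ t) t := by
  obtain ⟨ht0, ht1⟩ := ht
  have hN1 : HasDerivAt (fun u : ℝ => cc γ * (γ * u ^ (γ - 1)))
      (cc γ * (γ * ((γ - 1) * t ^ (γ - 1 - 1)))) t :=
    (((Real.hasDerivAt_rpow_const (x := t) (p := γ-1) (Or.inl ht0.ne'))).const_mul γ).const_mul (cc γ)
  have hN2 : HasDerivAt (fun u : ℝ => cc γ * u ^ γ) (cc γ * (γ * t ^ (γ - 1))) t :=
    (Real.hasDerivAt_rpow_const (Or.inl ht0.ne')).const_mul (cc γ)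
  have hP := (hN1.mul (hasDerivAt_D (γ := γ) ⟨ht0, ht1⟩)).sub (hN2.mul (hasDerivAt_D1 (γ := γ) ⟨ht0, ht1⟩))
  have hQ := (hasDerivAt_D (γ := γ) ⟨ht0, ht1⟩).pow 2
  have hQne : (D γ t) ^ 2 ≠ 0 := pow_ne_zero 2 hD
  have := hP.div hQ hQne
  have heq : h1 γ = fun u => (cc γ * (γ * u ^ (γ - 1)) * D γ u - cc γ * u ^ γ * D1 γ u) / (D γ u) ^ 2 := rfl
  rw [heq]
  refine this.congr_deriv ?_
  unfold h2
  rw [show γ - 2 = γ - 1 - 1 by ring]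
  push_cast
  simp only [Pi.mul_apply, Pi.sub_apply, Pi.pow_apply]
  ring

lemma cos_nonpos' {γ : ℝ} (hγ0 : 1 / 2 < γ) (hγ1 : γ < 1) : Real.cos (γ * Real.pi) ≤ 0 := by
  apply Real.cos_nonpos_of_pi_div_two_le_of_le
  · rw [div_le_iff₀ (by norm_num : (0:ℝ) < 2)]
    nlinarith [Real.pi_pos]
  · nlinarith [Real.pi_pos]

lemma D_lb {γ : ℝ} (hγ0 : 1 / 2 < γ) (hγ1 : γ < 1) :
    ∀ t ∈ Set.Icc (0:ℝ) 1, 1/4 ≤ D γ t := by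
  intro t ⟨ht0, ht1⟩
  have hγpos : (0:ℝ) < γ := by linarith
  have hcos := cos_nonpos' hγ0 hγ1
  have h3 : 0 ≤ -(2 * t ^ γ * (1 - t) ^ γ * Real.cos (γ * Real.pi)) := by
    have a1 := Real.rpow_nonneg ht0 γ
    have a2 := Real.rpow_nonneg (by linarith : (0:ℝ) ≤ 1 - t) γ
    nlinarith [mul_nonneg (mul_nonneg a1 a2) (neg_nonneg.2 hcos)]
  have half : ((1:ℝ)/2) ^ (2*γ) ≥ 1/4 := by
    have : ((1:ℝ)/2) ^ (2*γ) ≥ ((1:ℝ)/2) ^ ((2:ℕ):ℝ) :=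
      Real.rpow_le_rpow_of_exponent_ge (by norm_num) (by norm_num) (by push_cast; linarith)
    rwa [Real.rpow_natCast, show ((1:ℝ)/2)^(2:ℕ) = 1/4 by norm_num] at this
  have key : 1/4 ≤ (1 - t) ^ (2*γ) + t ^ (2*γ) := by
    rcases le_or_gt t (1/2) with h | h
    · have h1 : ((1:ℝ)/2) ^ (2*γ) ≤ (1 - t) ^ (2*γ) :=
        Real.rpow_le_rpow (by norm_num) (by linarith) (by linarith)
      have := Real.rpow_nonneg ht0 (2*γ)
      linarith
    · have h1 : ((1:ℝ)/2) ^ (2*γ) ≤ t ^ (2*γ) :=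
        Real.rpow_le_rpow (by norm_num) (by linarith) (by linarith)
      have := Real.rpow_nonneg (by linarith : (0:ℝ) ≤ 1 - t) (2*γ)
      linarith
  unfold D
  linarith

lemma D_ub {γ : ℝ} (hγ0 : 1 / 2 < γ) (hγ1 : γ < 1) :
    ∀ t ∈ Set.Icc (0:ℝ) 1, D γ t ≤ 4 := by
  intro t ⟨ht0, ht1⟩
  have h1 : (1 - t) ^ (2*γ) ≤ 1 := Real.rpow_le_one (by linarith) (by linarith) (by linarith)
  have h2 : t ^ (2*γ) ≤ 1 := Real.rpow_le_one ht0 ht1 (by linarith)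
  have h3 : t ^ γ ≤ 1 := Real.rpow_le_one ht0 ht1 (by linarith)
  have h4 : (1 - t) ^ γ ≤ 1 := Real.rpow_le_one (by linarith) (by linarith) (by linarith)
  have h5 : 0 ≤ t ^ γ := Real.rpow_nonneg ht0 γ
  have h6 : 0 ≤ (1 - t) ^ γ := Real.rpow_nonneg (by linarith) γ
  have h7 := Real.neg_one_le_cos (γ * Real.pi)
  have h8 := Real.cos_le_one (γ * Real.pi)
  have hab0 : 0 ≤ t ^ γ * (1 - t) ^ γ := mul_nonneg h5 h6
  have hab1 : t ^ γ * (1 - t) ^ γ ≤ 1 := by nlinarith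
  have hkey : -(t ^ γ * (1 - t) ^ γ * Real.cos (γ * Real.pi)) ≤ 1 := by nlinarith
  unfold D
  nlinarith

lemma D_abs_le {γ : ℝ} (hγ0 : 1 / 2 < γ) (hγ1 : γ < 1) {t : ℝ} (ht : t ∈ Set.Icc (0:ℝ) 1) :
    |D γ t| ≤ 4 := by
  rw [abs_of_pos (lt_of_lt_of_le (by norm_num) (D_lb hγ0 hγ1 t ht))]
  exact D_ub hγ0 hγ1 t ht

lemma term_bound (m e a b k : ℝ) (hm0 : 0 < m) (hm1 : m < 1) (hea : e ≤ a) :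
    ∃ C, 0 < C ∧ ∀ t ∈ Set.Ioc (0:ℝ) m, |k| * t ^ a * (1 - t) ^ b ≤ C * t ^ e := by
  refine ⟨(|k| + 1) * max 1 ((1 - m) ^ b), by positivity, ?_⟩
  rintro t ⟨ht0, htm⟩
  have ht1 : t < 1 := lt_of_le_of_lt htm hm1
  have h1 : t ^ a ≤ t ^ e := Real.rpow_le_rpow_of_exponent_ge ht0 ht1.le hea
  have h2 : (1 - t) ^ b ≤ max 1 ((1 - m) ^ b) := by
    rcases le_or_gt 0 b with hb | hb
    · exact le_max_of_le_left (Real.rpow_le_one (by linarith) (by linarith) hb)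
    · exact le_max_of_le_right (Real.rpow_le_rpow_of_nonpos (by linarith) (by linarith) hb.le)
  have h3 : 0 ≤ t ^ a := Real.rpow_nonneg ht0.le a
  have h4 : 0 ≤ (1 - t) ^ b := Real.rpow_nonneg (by linarith) b
  have h5 : 0 ≤ t ^ e := Real.rpow_nonneg ht0.le e
  have h6 : (0:ℝ) ≤ |k| := abs_nonneg k
  have hM : (0:ℝ) < max 1 ((1 - m) ^ b) := lt_of_lt_of_le one_pos (le_max_left _ _)
  nlinarith [mul_le_mul h1 h2 h4 h5, mul_le_mul_of_nonneg_left (mul_le_mul h1 h2 h4 h5) h6]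

lemma abs_add3 (a b c : ℝ) : |a + b - c| ≤ |a| + |b| + |c| := by
  have h1 := abs_add_le (a + b) (-c)
  rw [abs_neg] at h1
  have h2 := abs_add_le a b
  have : a + b - c = a + b + -c := by ring
  rw [this]
  linarith

lemma D1_bound {γ : ℝ} (hγ0 : 1 / 2 < γ) (hγ1 : γ < 1) {m : ℝ} (hm0 : 0 < m) (hm1 : m < 1) :
    ∃ C, 0 < C ∧ ∀ t ∈ Set.Ioc (0:ℝ) m, |D1 γ t| ≤ C * t ^ (γ - 1) := by
  obtain ⟨C1, hC1, H1⟩ := term_bound m (γ-1) 0 (2*γ-1) (2*γ) hm0 hm1 (by linarith)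
  obtain ⟨C2, hC2, H2⟩ := term_bound m (γ-1) (2*γ-1) 0 (2*γ) hm0 hm1 (by linarith)
  obtain ⟨C3, hC3, H3⟩ := term_bound m (γ-1) (γ-1) γ (2*γ*Real.cos (γ*Real.pi)) hm0 hm1 le_rfl
  obtain ⟨C4, hC4, H4⟩ := term_bound m (γ-1) γ (γ-1) (2*γ*Real.cos (γ*Real.pi)) hm0 hm1 (by linarith)
  refine ⟨C1+C2+C3+C4, by positivity, ?_⟩
  rintro t ⟨ht0, htm⟩
  have ht1 : t < 1 := lt_of_le_of_lt htm hm1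
  have e1 := H1 t ⟨ht0, htm⟩
  have e2 := H2 t ⟨ht0, htm⟩
  have e3 := H3 t ⟨ht0, htm⟩
  have e4 := H4 t ⟨ht0, htm⟩
  rw [Real.rpow_zero, mul_one] at e1 e2
  have n1 : (0:ℝ) ≤ (1-t)^(2*γ-1) := Real.rpow_nonneg (by linarith) _
  have n2 : (0:ℝ) ≤ t^(2*γ-1) := Real.rpow_nonneg ht0.le _
  have n3 : (0:ℝ) ≤ t^(γ-1) := Real.rpow_nonneg ht0.le _
  have n4 : (0:ℝ) ≤ (1-t)^γ := Real.rpow_nonneg (by linarith) _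
  have n5 : (0:ℝ) ≤ t^γ := Real.rpow_nonneg ht0.le _
  have n6 : (0:ℝ) ≤ (1-t)^(γ-1) := Real.rpow_nonneg (by linarith) _
  have step : |D1 γ t| ≤ |(-(2 * γ * (1 - t) ^ (2 * γ - 1)))| + |2 * γ * t ^ (2 * γ - 1)|
      + |2 * γ * Real.cos (γ * Real.pi) * (t ^ (γ - 1) * (1 - t) ^ γ - t ^ γ * (1 - t) ^ (γ - 1))| := by
    have := abs_add3 (-(2 * γ * (1 - t) ^ (2 * γ - 1))) (2 * γ * t ^ (2 * γ - 1))
      (2 * γ * Real.cos (γ * Real.pi) * (t ^ (γ - 1) * (1 - t) ^ γ - t ^ γ * (1 - t) ^ (γ - 1)))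
    unfold D1
    exact this
  have p1 : |(-(2 * γ * (1 - t) ^ (2 * γ - 1)))| ≤ C1 * t^(γ-1) := by
    rw [abs_neg, abs_mul, abs_of_nonneg n1]
    exact e1
  have p2 : |2 * γ * t ^ (2 * γ - 1)| ≤ C2 * t^(γ-1) := by
    rw [abs_mul, abs_of_nonneg n2]
    exact e2
  have p3 : |2 * γ * Real.cos (γ * Real.pi) * (t ^ (γ - 1) * (1 - t) ^ γ - t ^ γ * (1 - t) ^ (γ - 1))|
      ≤ C3 * t^(γ-1) + C4 * t^(γ-1) := by
    rw [abs_mul]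
    have hxy : |t ^ (γ - 1) * (1 - t) ^ γ - t ^ γ * (1 - t) ^ (γ - 1)|
        ≤ t ^ (γ - 1) * (1 - t) ^ γ + t ^ γ * (1 - t) ^ (γ - 1) := by
      have := abs_sub (t ^ (γ - 1) * (1 - t) ^ γ) (t ^ γ * (1 - t) ^ (γ - 1))
      rw [abs_of_nonneg (mul_nonneg n3 n4), abs_of_nonneg (mul_nonneg n5 n6)] at this
      exact this
    have q3 : |2*γ*Real.cos (γ*Real.pi)| * (t ^ (γ - 1) * (1 - t) ^ γ) ≤ C3 * t^(γ-1) := by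
      calc |2*γ*Real.cos (γ*Real.pi)| * (t ^ (γ - 1) * (1 - t) ^ γ)
          = |2*γ*Real.cos (γ*Real.pi)| * t ^ (γ - 1) * (1 - t) ^ γ := by ring
        _ ≤ _ := e3
    have q4 : |2*γ*Real.cos (γ*Real.pi)| * (t ^ γ * (1 - t) ^ (γ-1)) ≤ C4 * t^(γ-1) := by
      calc |2*γ*Real.cos (γ*Real.pi)| * (t ^ γ * (1 - t) ^ (γ-1))
          = |2*γ*Real.cos (γ*Real.pi)| * t ^ γ * (1 - t) ^ (γ-1) := by ring
        _ ≤ _ := e4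
    nlinarith [abs_nonneg (2*γ*Real.cos (γ*Real.pi)), mul_le_mul_of_nonneg_left hxy
      (abs_nonneg (2*γ*Real.cos (γ*Real.pi)))]
  calc |D1 γ t| ≤ _ := step
    _ ≤ C1 * t^(γ-1) + C2 * t^(γ-1) + (C3 * t^(γ-1) + C4 * t^(γ-1)) := by linarith
    _ = (C1+C2+C3+C4) * t^(γ-1) := by ring

lemma D2_bound {γ : ℝ} (hγ0 : 1 / 2 < γ) (hγ1 : γ < 1) {m : ℝ} (hm0 : 0 < m) (hm1 : m < 1) :
    ∃ C, 0 < C ∧ ∀ t ∈ Set.Ioc (0:ℝ) m, |D2 γ t| ≤ C * t ^ (γ - 2) := by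
  obtain ⟨C1, hC1, H1⟩ := term_bound m (γ-2) 0 (2*γ-2) (2*γ*(2*γ-1)) hm0 hm1 (by linarith)
  obtain ⟨C2, hC2, H2⟩ := term_bound m (γ-2) (2*γ-2) 0 (2*γ*(2*γ-1)) hm0 hm1 (by linarith)
  obtain ⟨C3, hC3, H3⟩ := term_bound m (γ-2) (γ-2) γ (2*γ*Real.cos (γ*Real.pi)*(γ-1)) hm0 hm1 le_rfl
  obtain ⟨C4, hC4, H4⟩ := term_bound m (γ-2) (γ-1) (γ-1) (2*γ*Real.cos (γ*Real.pi)*γ) hm0 hm1 (by linarith)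
  obtain ⟨C5, hC5, H5⟩ := term_bound m (γ-2) γ (γ-2) (2*γ*Real.cos (γ*Real.pi)*(γ-1)) hm0 hm1 (by linarith)
  refine ⟨C1+C2+C3+C4+C4+C5, by positivity, ?_⟩
  rintro t ⟨ht0, htm⟩
  have ht1 : t < 1 := lt_of_le_of_lt htm hm1
  have e1 := H1 t ⟨ht0, htm⟩
  have e2 := H2 t ⟨ht0, htm⟩
  have e3 := H3 t ⟨ht0, htm⟩
  have e4 := H4 t ⟨ht0, htm⟩
  have e5 := H5 t ⟨ht0, htm⟩
  rw [Real.rpow_zero, mul_one] at e1 e2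
  have n1 : (0:ℝ) ≤ (1-t)^(2*γ-2) := Real.rpow_nonneg (by linarith) _
  have n2 : (0:ℝ) ≤ t^(2*γ-2) := Real.rpow_nonneg ht0.le _
  have n3 : (0:ℝ) ≤ t^(γ-2) := Real.rpow_nonneg ht0.le _
  have n4 : (0:ℝ) ≤ (1-t)^γ := Real.rpow_nonneg (by linarith) _
  have n5 : (0:ℝ) ≤ t^γ := Real.rpow_nonneg ht0.le _
  have n6 : (0:ℝ) ≤ (1-t)^(γ-1) := Real.rpow_nonneg (by linarith) _
  have n7 : (0:ℝ) ≤ t^(γ-1) := Real.rpow_nonneg ht0.le _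
  have n8 : (0:ℝ) ≤ (1-t)^(γ-2) := Real.rpow_nonneg (by linarith) _
  set K := 2*γ*Real.cos (γ*Real.pi) with hK
  set X1 := (γ-1) * t^(γ-2) * (1-t)^γ with hX1
  set X2 := γ * t^(γ-1) * (1-t)^(γ-1) with hX2
  set X4 := (γ-1) * t^γ * (1-t)^(γ-2) with hX4
  have step : |D2 γ t| ≤ |2*γ*(2*γ-1)*(1-t)^(2*γ-2)| + |2*γ*(2*γ-1)*t^(2*γ-2)|
      + |K * (X1 - X2 - (X2 - X4))| := by
    have := abs_add3 (2*γ*(2*γ-1)*(1-t)^(2*γ-2)) (2*γ*(2*γ-1)*t^(2*γ-2))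
      (K * (X1 - X2 - (X2 - X4)))
    unfold D2
    exact this
  have p1 : |2*γ*(2*γ-1)*(1-t)^(2*γ-2)| ≤ C1 * t^(γ-2) := by
    rw [abs_mul, abs_of_nonneg n1]; exact e1
  have p2 : |2*γ*(2*γ-1)*t^(2*γ-2)| ≤ C2 * t^(γ-2) := by
    rw [abs_mul, abs_of_nonneg n2]; exact e2
  have p3 : |K * (X1 - X2 - (X2 - X4))| ≤ (C3 + C4 + C4 + C5) * t^(γ-2) := by
    have hX1a : |K| * |X1| ≤ C3 * t^(γ-2) := by
      calc |K| * |X1| = |K * X1| := (abs_mul K X1).symm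
        _ = |(K * (γ-1)) * (t^(γ-2) * (1-t)^γ)| := by rw [hX1]; congr 1; ring
        _ = |K * (γ-1)| * (t^(γ-2) * (1-t)^γ) := by
              rw [abs_mul, abs_of_nonneg (mul_nonneg n3 n4)]
        _ = |K * (γ-1)| * t^(γ-2) * (1-t)^γ := by ring
        _ ≤ _ := e3
    have hX2a : |K| * |X2| ≤ C4 * t^(γ-2) := by
      calc |K| * |X2| = |K * X2| := (abs_mul K X2).symm
        _ = |(K * γ) * (t^(γ-1) * (1-t)^(γ-1))| := by rw [hX2]; congr 1; ring
        _ = |K * γ| * (t^(γ-1) * (1-t)^(γ-1)) := by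
              rw [abs_mul, abs_of_nonneg (mul_nonneg n7 n6)]
        _ = |K * γ| * t^(γ-1) * (1-t)^(γ-1) := by ring
        _ ≤ _ := e4
    have hX4a : |K| * |X4| ≤ C5 * t^(γ-2) := by
      calc |K| * |X4| = |K * X4| := (abs_mul K X4).symm
        _ = |(K * (γ-1)) * (t^γ * (1-t)^(γ-2))| := by rw [hX4]; congr 1; ring
        _ = |K * (γ-1)| * (t^γ * (1-t)^(γ-2)) := by
              rw [abs_mul, abs_of_nonneg (mul_nonneg n5 n8)]
        _ = |K * (γ-1)| * t^γ * (1-t)^(γ-2) := by ring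
        _ ≤ _ := e5
    have htri : |X1 - X2 - (X2 - X4)| ≤ |X1| + |X2| + (|X2| + |X4|) := by
      have h1 := abs_sub (X1 - X2) (X2 - X4)
      have h2 := abs_sub X1 X2
      have h3 := abs_sub X2 X4
      linarith
    rw [abs_mul]
    have := mul_le_mul_of_nonneg_left htri (abs_nonneg K)
    nlinarith [abs_nonneg K, abs_nonneg X1, abs_nonneg X2, abs_nonneg X4]
  calc |D2 γ t| ≤ _ := step
    _ ≤ C1 * t^(γ-2) + C2 * t^(γ-2) + (C3 + C4 + C4 + C5) * t^(γ-2) := by linarith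
    _ = (C1+C2+C3+C4+C4+C5) * t^(γ-2) := by ring

lemma div_sq_le {n d B : ℝ} (hd : 1/4 ≤ d) (hn : |n| ≤ B) : |n / d^2| ≤ 16*B := by
  have hd0 : 0 < d := by linarith
  have h16 : 1/16 ≤ d^2 := by nlinarith
  rw [abs_div, abs_of_pos (by positivity : (0:ℝ) < d^2), div_le_iff₀ (by positivity)]
  nlinarith [abs_nonneg n, mul_nonneg (le_trans (abs_nonneg n) hn) (by linarith : (0:ℝ) ≤ d^2 - 1/16)]

lemma div_q_le {n d B : ℝ} (hd : 1/4 ≤ d) (hn : |n| ≤ B) : |n / (d^2)^2| ≤ 256*B := by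
  have hd0 : 0 < d := by linarith
  have h16 : 1/16 ≤ d^2 := by nlinarith
  have h256 : 1/256 ≤ (d^2)^2 := by nlinarith
  rw [abs_div, abs_of_pos (by positivity : (0:ℝ) < (d^2)^2), div_le_iff₀ (by positivity)]
  nlinarith [abs_nonneg n, mul_nonneg (le_trans (abs_nonneg n) hn)
    (by linarith : (0:ℝ) ≤ (d^2)^2 - 1/256)]

lemma num_bound {γ : ℝ} (hγ0 : 1 / 2 < γ) (hγ1 : γ < 1) {m : ℝ} (hm0 : 0 < m) (hm1 : m < 1) :
    ∃ C, 0 < C ∧ ∀ t ∈ Set.Ioc (0:ℝ) m,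
      |cc γ * (γ * t ^ (γ - 1)) * D γ t - cc γ * t ^ γ * D1 γ t| ≤ C * t ^ (γ - 1) := by
  obtain ⟨C1, hC1, H1⟩ := D1_bound hγ0 hγ1 hm0 hm1
  refine ⟨(4*γ + C1)*(|cc γ|+1), by nlinarith [abs_nonneg (cc γ)], ?_⟩
  rintro t ⟨ht0, htm⟩
  have ht1 : t < 1 := lt_of_le_of_lt htm hm1
  have hIcc : t ∈ Set.Icc (0:ℝ) 1 := ⟨ht0.le, ht1.le⟩
  have hDa := D_abs_le hγ0 hγ1 hIcc
  have e1 := H1 t ⟨ht0, htm⟩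
  have n3 : (0:ℝ) ≤ t^(γ-1) := Real.rpow_nonneg ht0.le _
  have n5 : (0:ℝ) ≤ t^γ := Real.rpow_nonneg ht0.le _
  have htγ : t^γ ≤ 1 := Real.rpow_le_one ht0.le ht1.le (by linarith)
  have a1 : |cc γ * (γ * t^(γ-1)) * D γ t| ≤ |cc γ| * γ * t^(γ-1) * 4 := by
    rw [abs_mul, abs_mul, abs_of_nonneg (mul_nonneg (by linarith : (0:ℝ) ≤ γ) n3)]
    calc |cc γ| * (γ * t^(γ-1)) * |D γ t|
        ≤ |cc γ| * (γ * t^(γ-1)) * 4 := by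
          apply mul_le_mul_of_nonneg_left hDa
          exact mul_nonneg (abs_nonneg _) (mul_nonneg (by linarith) n3)
      _ = |cc γ| * γ * t^(γ-1) * 4 := by ring
  have a2 : |cc γ * t^γ * D1 γ t| ≤ |cc γ| * (C1 * t^(γ-1)) := by
    rw [abs_mul, abs_mul, abs_of_nonneg n5]
    calc |cc γ| * t^γ * |D1 γ t| ≤ (|cc γ| * 1) * (C1 * t^(γ-1)) := by
          apply mul_le_mul
          · exact mul_le_mul_of_nonneg_left htγ (abs_nonneg _)
          · exact e1
          · exact abs_nonneg _
          · positivity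
      _ = |cc γ| * (C1 * t^(γ-1)) := by ring
  have tri := abs_sub (cc γ * (γ * t^(γ-1)) * D γ t) (cc γ * t^γ * D1 γ t)
  nlinarith [abs_nonneg (cc γ), mul_nonneg (by linarith : (0:ℝ) ≤ 4*γ) n3,
    mul_nonneg hC1.le n3]

lemma h1_bound {γ : ℝ} (hγ0 : 1 / 2 < γ) (hγ1 : γ < 1) {m : ℝ} (hm0 : 0 < m) (hm1 : m < 1) :
    ∃ C, 0 < C ∧ ∀ t ∈ Set.Ioc (0:ℝ) m, |h1 γ t| ≤ C * t ^ (γ - 1) := by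
  obtain ⟨E, hE, HE⟩ := num_bound hγ0 hγ1 hm0 hm1
  refine ⟨16*E, by positivity, ?_⟩
  rintro t ⟨ht0, htm⟩
  have ht1 : t < 1 := lt_of_le_of_lt htm hm1
  have hDl := D_lb hγ0 hγ1 t ⟨ht0.le, ht1.le⟩
  have := div_sq_le hDl (HE t ⟨ht0, htm⟩)
  calc |h1 γ t| ≤ 16*(E * t^(γ-1)) := this
    _ = 16*E * t^(γ-1) := by ring

lemma h2_bound {γ : ℝ} (hγ0 : 1 / 2 < γ) (hγ1 : γ < 1) {m : ℝ} (hm0 : 0 < m) (hm1 : m < 1) :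
    ∃ C, 0 < C ∧ ∀ t ∈ Set.Ioc (0:ℝ) m, |h2 γ t| ≤ C * t ^ (γ - 2) := by
  obtain ⟨E, hE, HE⟩ := num_bound hγ0 hγ1 hm0 hm1
  obtain ⟨C1, hC1, H1⟩ := D1_bound hγ0 hγ1 hm0 hm1
  obtain ⟨C2, hC2, H2⟩ := D2_bound hγ0 hγ1 hm0 hm1
  refine ⟨256*(16*((4*(γ*(1-γ)) + C2)*(|cc γ|+1)) + 8*C1*E), ?_, ?_⟩
  · have : (0:ℝ) < γ*(1-γ) := by nlinarith
    nlinarith [abs_nonneg (cc γ), mul_pos hC1 hE]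
  rintro t ⟨ht0, htm⟩
  have ht1 : t < 1 := lt_of_le_of_lt htm hm1
  have hIcc : t ∈ Set.Icc (0:ℝ) 1 := ⟨ht0.le, ht1.le⟩
  have hDa := D_abs_le hγ0 hγ1 hIcc
  have hDl := D_lb hγ0 hγ1 t hIcc
  have e1 := H1 t ⟨ht0, htm⟩
  have e2 := H2 t ⟨ht0, htm⟩
  have eE := HE t ⟨ht0, htm⟩
  have n2 : (0:ℝ) ≤ t^(γ-2) := Real.rpow_nonneg ht0.le _
  have n3 : (0:ℝ) ≤ t^(γ-1) := Real.rpow_nonneg ht0.le _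
  have n5 : (0:ℝ) ≤ t^γ := Real.rpow_nonneg ht0.le _
  have htγ : t^γ ≤ 1 := Real.rpow_le_one ht0.le ht1.le (by linarith)
  have hDsq : |(D γ t)^2| ≤ 16 := by
    rw [abs_pow]
    nlinarith [abs_nonneg (D γ t)]
  -- bound for P2 = cc γ * (γ * ((γ-1) * t^(γ-2))) * D γ t - cc γ * t^γ * D2 γ t
  have b1 : |cc γ * (γ * ((γ-1) * t^(γ-2))) * D γ t| ≤ |cc γ| * (γ*(1-γ)) * t^(γ-2) * 4 := by
    rw [abs_mul, abs_mul]
    have hg : |γ * ((γ-1) * t^(γ-2))| = γ*(1-γ) * t^(γ-2) := by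
      rw [abs_mul, abs_mul, abs_of_nonneg n2, abs_of_nonneg (by linarith : (0:ℝ) ≤ γ),
        abs_of_neg (by linarith : γ - 1 < 0)]
      ring
    rw [hg]
    calc |cc γ| * (γ*(1-γ) * t^(γ-2)) * |D γ t| ≤ |cc γ| * (γ*(1-γ) * t^(γ-2)) * 4 := by
          apply mul_le_mul_of_nonneg_left hDa
          have : (0:ℝ) ≤ γ*(1-γ) := by nlinarith
          positivity
      _ = |cc γ| * (γ*(1-γ)) * t^(γ-2) * 4 := by ring
  have b2 : |cc γ * t^γ * D2 γ t| ≤ |cc γ| * (C2 * t^(γ-2)) := by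
    rw [abs_mul, abs_mul, abs_of_nonneg n5]
    calc |cc γ| * t^γ * |D2 γ t| ≤ (|cc γ| * 1) * (C2 * t^(γ-2)) := by
          apply mul_le_mul
          · exact mul_le_mul_of_nonneg_left htγ (abs_nonneg _)
          · exact e2
          · exact abs_nonneg _
          · positivity
      _ = |cc γ| * (C2 * t^(γ-2)) := by ring
  have hP2 : |cc γ * (γ * ((γ-1) * t^(γ-2))) * D γ t - cc γ * t^γ * D2 γ t|
      ≤ (4*(γ*(1-γ)) + C2)*(|cc γ|+1) * t^(γ-2) := by
    have tri := abs_sub (cc γ * (γ * ((γ-1) * t^(γ-2))) * D γ t) (cc γ * t^γ * D2 γ t)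
    nlinarith [abs_nonneg (cc γ), mul_nonneg (by nlinarith : (0:ℝ) ≤ 4*(γ*(1-γ))) n2,
      mul_nonneg hC2.le n2]
  -- t^(γ-1) * t^(γ-1) ≤ t^(γ-2)
  have hsq : t^(γ-1) * t^(γ-1) ≤ t^(γ-2) := by
    have : t^(γ-1) * t^(γ-1) = t^(2*γ-2) := by
      rw [← Real.rpow_add ht0]
      norm_num
      ring_nf
    rw [this]
    exact Real.rpow_le_rpow_of_exponent_ge ht0 ht1.le (by linarith)
  -- |num2| = |P2 * D^2 - P * (2 * D * D1)|
  have hA : |(cc γ * (γ * ((γ-1) * t^(γ-2))) * D γ t - cc γ * t^γ * D2 γ t) * (D γ t)^2|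
      ≤ (4*(γ*(1-γ)) + C2)*(|cc γ|+1) * t^(γ-2) * 16 := by
    rw [abs_mul]
    apply mul_le_mul hP2 hDsq (abs_nonneg _)
    have : (0:ℝ) ≤ γ*(1-γ) := by nlinarith
    positivity
  have hB : |(cc γ * (γ * t^(γ-1)) * D γ t - cc γ * t^γ * D1 γ t) * (2 * D γ t * D1 γ t)|
      ≤ E * t^(γ-1) * (8 * (C1 * t^(γ-1))) := by
    rw [abs_mul]
    apply mul_le_mul eE _ (abs_nonneg _) (by positivity)
    calc |2 * D γ t * D1 γ t| = 2 * |D γ t| * |D1 γ t| := by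
          rw [abs_mul, abs_mul]
          norm_num
      _ ≤ 2 * 4 * (C1 * t^(γ-1)) := by
          apply mul_le_mul _ e1 (abs_nonneg _) (by norm_num)
          linarith
      _ = 8 * (C1 * t^(γ-1)) := by ring
  have tri2 := abs_sub ((cc γ * (γ * ((γ-1) * t^(γ-2))) * D γ t - cc γ * t^γ * D2 γ t) * (D γ t)^2)
    ((cc γ * (γ * t^(γ-1)) * D γ t - cc γ * t^γ * D1 γ t) * (2 * D γ t * D1 γ t))
  have hnum2 : |(cc γ * (γ * ((γ-1) * t^(γ-2))) * D γ t - cc γ * t^γ * D2 γ t) * (D γ t)^2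
      - (cc γ * (γ * t^(γ-1)) * D γ t - cc γ * t^γ * D1 γ t) * (2 * D γ t * D1 γ t)|
      ≤ (16*((4*(γ*(1-γ)) + C2)*(|cc γ|+1)) + 8*C1*E) * t^(γ-2) := by
    have hBB : E * t^(γ-1) * (8 * (C1 * t^(γ-1))) ≤ 8*C1*E * t^(γ-2) := by
      calc E * t^(γ-1) * (8 * (C1 * t^(γ-1))) = 8*C1*E * (t^(γ-1) * t^(γ-1)) := by ring
        _ ≤ 8*C1*E * t^(γ-2) := by
            apply mul_le_mul_of_nonneg_left hsq
            positivity
    linarith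
  have := div_q_le hDl hnum2
  calc |h2 γ t| ≤ 256 * ((16*((4*(γ*(1-γ)) + C2)*(|cc γ|+1)) + 8*C1*E) * t^(γ-2)) := this
    _ = 256*(16*((4*(γ*(1-γ)) + C2)*(|cc γ|+1)) + 8*C1*E) * t^(γ-2) := by ring

lemma meas_h1 {γ : ℝ} : Measurable (h1 γ) := by
  unfold h1 D D1 cc
  fun_prop

lemma meas_h2 {γ : ℝ} : Measurable (h2 γ) := by
  unfold h2 D D1 D2 cc
  fun_prop

lemma Ibeta {γ : ℝ} (hγ0 : 1 / 2 < γ) (hγ1 : γ < 1) :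
    IntervalIntegrable (fun s : ℝ => s^(γ-1)*(1-s)^(γ-1)) volume 0 1 := by
  have meas : Measurable fun s : ℝ => s^(γ-1)*(1-s)^(γ-1) := by fun_prop
  have half2 : ((1:ℝ)/2) ^ (γ-1) ≤ 2 := by
    have : ((1:ℝ)/2) ^ (γ-1) ≤ ((1:ℝ)/2) ^ (-1:ℝ) :=
      Real.rpow_le_rpow_of_exponent_ge (by norm_num) (by norm_num) (by linarith)
    rwa [Real.rpow_neg_one, show ((1:ℝ)/2)⁻¹ = 2 by norm_num] at this
  have p1 : IntervalIntegrable (fun s : ℝ => s^(γ-1)*(1-s)^(γ-1)) volume 0 (1/2) := by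
    apply IntervalIntegrable.mono_fun'
      (g := fun s : ℝ => 2 * s^(γ-1))
    · exact (intervalIntegral.intervalIntegrable_rpow' (by linarith)).const_mul 2
    · exact meas.aestronglyMeasurable
    · rw [Filter.EventuallyLE, ae_restrict_iff' measurableSet_uIoc]
      apply Filter.Eventually.of_forall
      intro s hs
      rw [Set.uIoc_of_le (by norm_num : (0:ℝ) ≤ 1/2)] at hs
      obtain ⟨hs0, hs2⟩ := hs
      have n1 : (0:ℝ) ≤ s^(γ-1) := Real.rpow_nonneg hs0.le _
      have n2 : (0:ℝ) ≤ (1-s)^(γ-1) := Real.rpow_nonneg (by linarith) _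
      have hb : (1-s)^(γ-1) ≤ 2 := by
        have := Real.rpow_le_rpow_of_nonpos (by norm_num : (0:ℝ) < 1/2)
          (by linarith : (1:ℝ)/2 ≤ 1-s) (by linarith : γ-1 ≤ 0)
        linarith
      simp only [norm_mul, Real.norm_eq_abs, abs_of_nonneg n1, abs_of_nonneg n2]
      nlinarith
  have p2 : IntervalIntegrable (fun s : ℝ => s^(γ-1)*(1-s)^(γ-1)) volume (1/2) 1 := by
    apply IntervalIntegrable.mono_fun'
      (g := fun s : ℝ => 2 * (1-s)^(γ-1))
    · have := (intervalIntegral.intervalIntegrable_rpow' (a := 0) (b := 1/2)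
        (r := γ-1) (by linarith)).comp_sub_left 1
      norm_num at this
      exact (this.const_mul 2).symm
    · exact meas.aestronglyMeasurable
    · rw [Filter.EventuallyLE, ae_restrict_iff' measurableSet_uIoc]
      apply Filter.Eventually.of_forall
      intro s hs
      rw [Set.uIoc_of_le (by norm_num : (1:ℝ)/2 ≤ 1)] at hs
      obtain ⟨hs0, hs2⟩ := hs
      have n1 : (0:ℝ) ≤ s^(γ-1) := Real.rpow_nonneg (by linarith) _
      have n2 : (0:ℝ) ≤ (1-s)^(γ-1) := Real.rpow_nonneg (by linarith) _
      have hb : s^(γ-1) ≤ 2 := by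
        have := Real.rpow_le_rpow_of_nonpos (by norm_num : (0:ℝ) < 1/2)
          (by linarith : (1:ℝ)/2 ≤ s) (by linarith : γ-1 ≤ 0)
        linarith
      simp only [norm_mul, Real.norm_eq_abs, abs_of_nonneg n1, abs_of_nonneg n2]
      nlinarith
  exact p1.trans p2

lemma deriv_hDens_eq {γ : ℝ} (hγ0 : 1 / 2 < γ) (hγ1 : γ < 1) {t : ℝ}
    (ht : t ∈ Set.Ioo (0:ℝ) 1) : deriv (hDens γ) t = h1 γ t := by
  have hne : D γ t ≠ 0 :=
    ne_of_gt (lt_of_lt_of_le (by norm_num) (D_lb hγ0 hγ1 t (Set.Ioo_subset_Icc_self ht)))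
  exact (hasDerivAt_hDens hne ht).deriv

lemma deriv2_hDens_eq {γ : ℝ} (hγ0 : 1 / 2 < γ) (hγ1 : γ < 1) {t : ℝ}
    (ht : t ∈ Set.Ioo (0:ℝ) 1) : deriv (deriv (hDens γ)) t = h2 γ t := by
  have hne : D γ t ≠ 0 :=
    ne_of_gt (lt_of_lt_of_le (by norm_num) (D_lb hγ0 hγ1 t (Set.Ioo_subset_Icc_self ht)))
  have hev : deriv (hDens γ) =ᶠ[nhds t] h1 γ := by
    filter_upwards [Ioo_mem_nhds ht.1 ht.2] with u hu
    exact deriv_hDens_eq hγ0 hγ1 hu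
  rw [hev.deriv_eq]
  exact (hasDerivAt_h1 hne ht).deriv

end YY

theorem deriv_HDist (γ : ℝ) (hγ0 : 1 / 2 < γ) (hγ1 : γ < 1) :
    ∀ x ∈ Set.Ioo (0:ℝ) 1,
      deriv (HDist γ) x
        = (1 / x) * ∫ t in (0:ℝ)..x, (x - t) ^ (γ - 1) *
            (γ * deriv (hDens γ) t + t * deriv (deriv (hDens γ)) t) := by
  intro x hx
  obtain ⟨hx0, hx1⟩ := hx
  set ε := min x (1 - x) / 2 with hεdef
  have hε : 0 < ε := div_pos (lt_min hx0 (by linarith)) two_pos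
  have hεx : ε ≤ x / 2 := by
    have := min_le_left x (1 - x); rw [hεdef]; linarith
  have hεx' : ε ≤ (1 - x) / 2 := by
    have := min_le_right x (1 - x); rw [hεdef]; linarith
  have hlo : 0 < x - ε := by linarith
  have hm1 : x + ε < 1 := by linarith
  have hm0 : 0 < x + ε := by linarith
  obtain ⟨C1, hC1p, HC1⟩ := YY.h1_bound hγ0 hγ1 hm0 hm1
  obtain ⟨C2, hC2p, HC2⟩ := YY.h2_bound hγ0 hγ1 hm0 hm1
  -- measurability
  have measF : ∀ y : ℝ, Measurable (fun s : ℝ => (1-s)^(γ-1) * YY.h1 γ (y*s)) := by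
    intro y
    exact ((by fun_prop : Measurable fun s : ℝ => (1-s)^(γ-1))).mul
      (YY.meas_h1.comp (measurable_const.mul measurable_id))
  have measF' : Measurable (fun s : ℝ => (1-s)^(γ-1) * (YY.h2 γ (x*s) * s)) := by
    exact ((by fun_prop : Measurable fun s : ℝ => (1-s)^(γ-1))).mul
      ((YY.meas_h2.comp (measurable_const.mul measurable_id)).mul measurable_id)
  -- integrability of F x
  have hFx_int : IntervalIntegrable (fun s : ℝ => (1-s)^(γ-1) * YY.h1 γ (x*s)) volume 0 1 := by
    apply IntervalIntegrable.mono_fun'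
      (g := fun s : ℝ => (C1 * x^(γ-1)) * (s^(γ-1)*(1-s)^(γ-1)))
    · exact (YY.Ibeta hγ0 hγ1).const_mul _
    · exact (measF x).aestronglyMeasurable
    · rw [Filter.EventuallyLE, ae_restrict_iff' measurableSet_uIoc]
      apply Filter.Eventually.of_forall
      intro s hs
      rw [Set.uIoc_of_le (by norm_num : (0:ℝ) ≤ 1)] at hs
      obtain ⟨hs0, hs1⟩ := hs
      have hxs : x*s ∈ Set.Ioc (0:ℝ) (x+ε) :=
        ⟨mul_pos hx0 hs0, by nlinarith [mul_le_of_le_one_right hx0.le hs1]⟩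
      have e1 := HC1 (x*s) hxs
      have n2 : (0:ℝ) ≤ (1-s)^(γ-1) := Real.rpow_nonneg (by linarith) _
      have hnorm : ‖(1-s)^(γ-1) * YY.h1 γ (x*s)‖ = (1-s)^(γ-1) * |YY.h1 γ (x*s)| := by
        rw [Real.norm_eq_abs, abs_mul, abs_of_nonneg n2]
      rw [hnorm]
      have hxs_pow : (x*s)^(γ-1) = x^(γ-1) * s^(γ-1) := Real.mul_rpow hx0.le hs0.le
      calc (1-s)^(γ-1) * |YY.h1 γ (x*s)| ≤ (1-s)^(γ-1) * (C1 * (x*s)^(γ-1)) :=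
            mul_le_mul_of_nonneg_left e1 n2
        _ = (C1 * x^(γ-1)) * (s^(γ-1)*(1-s)^(γ-1)) := by rw [hxs_pow]; ring
  -- dominated differentiation under the integral sign
  have h_bound : ∀ᵐ s ∂(volume : Measure ℝ), s ∈ Set.uIoc (0:ℝ) 1 → ∀ y ∈ Metric.ball x ε,
      ‖(1-s)^(γ-1) * (YY.h2 γ (y*s) * s)‖ ≤ (C2 * (x-ε)^(γ-2)) * (s^(γ-1)*(1-s)^(γ-1)) := by
    apply Filter.Eventually.of_forall
    intro s hs y hy
    rw [Set.uIoc_of_le (by norm_num : (0:ℝ) ≤ 1)] at hs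
    obtain ⟨hs0, hs1⟩ := hs
    rw [Metric.mem_ball, Real.dist_eq] at hy
    obtain ⟨hya, hyb⟩ := abs_lt.mp hy
    have hy0 : 0 < y := by linarith
    have hysle : y*s ≤ y := mul_le_of_le_one_right hy0.le hs1
    have hys : y*s ∈ Set.Ioc (0:ℝ) (x+ε) := ⟨mul_pos hy0 hs0, by linarith⟩
    have e2 := HC2 (y*s) hys
    have n2 : (0:ℝ) ≤ (1-s)^(γ-1) := Real.rpow_nonneg (by linarith) _
    have nsg : (0:ℝ) ≤ s^(γ-2) := Real.rpow_nonneg hs0.le _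
    have hnorm : ‖(1-s)^(γ-1) * (YY.h2 γ (y*s) * s)‖
        = (1-s)^(γ-1) * (|YY.h2 γ (y*s)| * s) := by
      rw [Real.norm_eq_abs, abs_mul, abs_mul, abs_of_nonneg n2, abs_of_nonneg hs0.le]
    rw [hnorm]
    have hyy : y^(γ-2) ≤ (x-ε)^(γ-2) :=
      Real.rpow_le_rpow_of_nonpos hlo (by linarith) (by linarith)
    have hmulr : (y*s)^(γ-2) = y^(γ-2) * s^(γ-2) := Real.mul_rpow hy0.le hs0.le
    have hss : s^(γ-2) * s = s^(γ-1) := by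
      have h := Real.rpow_add_one hs0.ne' (γ-2)
      rw [show γ-1 = (γ-2)+1 by ring, h]
    calc (1-s)^(γ-1) * (|YY.h2 γ (y*s)| * s)
        ≤ (1-s)^(γ-1) * ((C2 * ((x-ε)^(γ-2) * s^(γ-2))) * s) := by
          apply mul_le_mul_of_nonneg_left _ n2
          apply mul_le_mul_of_nonneg_right _ hs0.le
          calc |YY.h2 γ (y*s)| ≤ C2 * (y*s)^(γ-2) := e2
            _ = C2 * (y^(γ-2) * s^(γ-2)) := by rw [hmulr]
            _ ≤ C2 * ((x-ε)^(γ-2) * s^(γ-2)) := by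
                apply mul_le_mul_of_nonneg_left _ hC2p.le
                exact mul_le_mul_of_nonneg_right hyy nsg
      _ = (C2 * (x-ε)^(γ-2)) * (s^(γ-1)*(1-s)^(γ-1)) := by rw [← hss]; ring
  have h_diff : ∀ᵐ s ∂(volume : Measure ℝ), s ∈ Set.uIoc (0:ℝ) 1 → ∀ y ∈ Metric.ball x ε,
      HasDerivAt (fun y => (1-s)^(γ-1) * YY.h1 γ (y*s))
        ((1-s)^(γ-1) * (YY.h2 γ (y*s) * s)) y := by
    apply Filter.Eventually.of_forall
    intro s hs y hy
    rw [Set.uIoc_of_le (by norm_num : (0:ℝ) ≤ 1)] at hs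
    obtain ⟨hs0, hs1⟩ := hs
    rw [Metric.mem_ball, Real.dist_eq] at hy
    obtain ⟨hya, hyb⟩ := abs_lt.mp hy
    have hy0 : 0 < y := by linarith
    have hysle : y*s ≤ y := mul_le_of_le_one_right hy0.le hs1
    have hys : y*s ∈ Set.Ioo (0:ℝ) 1 := ⟨mul_pos hy0 hs0, by linarith⟩
    have hne : YY.D γ (y*s) ≠ 0 :=
      ne_of_gt (lt_of_lt_of_le (by norm_num)
        (YY.D_lb hγ0 hγ1 _ (Set.Ioo_subset_Icc_self hys)))
    exact ((YY.hasDerivAt_h1 hne hys).comp y (hasDerivAt_mul_const s)).const_mul _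
  have hdom := intervalIntegral.hasDerivAt_integral_of_dominated_loc_of_deriv_le
      (F := fun y s => (1-s)^(γ-1) * YY.h1 γ (y*s))
      (F' := fun y s => (1-s)^(γ-1) * (YY.h2 γ (y*s) * s)) (x₀ := x) (a := (0:ℝ)) (b := 1)
      (bound := fun s => (C2 * (x-ε)^(γ-2)) * (s^(γ-1)*(1-s)^(γ-1))) (s := Metric.ball x ε) (Metric.ball_mem_nhds x hε)
      (Filter.Eventually.of_forall fun y => (measF y).aestronglyMeasurable)
      hFx_int
      measF'.aestronglyMeasurable
      h_bound
      ((YY.Ibeta hγ0 hγ1).const_mul _)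
      h_diff
  obtain ⟨hFi', hG'⟩ := hdom
  -- substitution identity
  have hsub : ∀ y ∈ Set.Ioo (0:ℝ) 1,
      HDist γ y = y^γ * ∫ s in (0:ℝ)..1, (1-s)^(γ-1) * YY.h1 γ (y*s) := by
    intro y hy
    obtain ⟨hy0, hy1⟩ := hy
    have step1 : HDist γ y = ∫ t in (0:ℝ)..y, (y-t)^(γ-1) * YY.h1 γ t := by
      apply intervalIntegral.integral_congr_ae
      apply Filter.Eventually.of_forall
      intro t ht
      rw [Set.uIoc_of_le hy0.le] at ht
      rw [YY.deriv_hDens_eq hγ0 hγ1 ⟨ht.1, lt_of_le_of_lt ht.2 hy1⟩]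
    have step2 : (y • ∫ s in (0:ℝ)..1, (y - y*s)^(γ-1) * YY.h1 γ (y*s))
        = ∫ t in (0:ℝ)..y, (y-t)^(γ-1) * YY.h1 γ t := by
      have := intervalIntegral.smul_integral_comp_mul_left (a := 0) (b := 1)
        (fun t => (y-t)^(γ-1) * YY.h1 γ t) y
      simpa using this
    have step3 : ∫ s in (0:ℝ)..1, (y - y*s)^(γ-1) * YY.h1 γ (y*s)
        = ∫ s in (0:ℝ)..1, y^(γ-1) * ((1-s)^(γ-1) * YY.h1 γ (y*s)) := by
      apply intervalIntegral.integral_congr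
      intro s hs
      rw [Set.uIcc_of_le (by norm_num : (0:ℝ) ≤ 1)] at hs
      have hrw : y - y*s = y * (1-s) := by ring
      beta_reduce
      rw [hrw, Real.mul_rpow hy0.le (by linarith [hs.2] : (0:ℝ) ≤ 1-s)]
      ring
    have hyγ : y^γ = y^(γ-1) * y := by
      conv_lhs => rw [show γ = (γ-1)+1 by ring]
      exact Real.rpow_add_one hy0.ne' (γ-1)
    rw [step1, ← step2, step3, intervalIntegral.integral_const_mul, smul_eq_mul, hyγ]
    ring
  -- derivative of HDist
  have hpow : HasDerivAt (fun y : ℝ => y^γ) (γ * x^(γ-1)) x :=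
    Real.hasDerivAt_rpow_const (Or.inl hx0.ne')
  have hHD : HasDerivAt (HDist γ)
      (γ * x^(γ-1) * (∫ s in (0:ℝ)..1, (1-s)^(γ-1) * YY.h1 γ (x*s))
        + x^γ * ∫ s in (0:ℝ)..1, (1-s)^(γ-1) * (YY.h2 γ (x*s) * s)) x := by
    apply (hpow.mul hG').congr_of_eventuallyEq
    filter_upwards [Ioo_mem_nhds hx0 hx1] with y hy
    exact hsub y hy
  rw [hHD.deriv]
  -- rewrite the right-hand side
  have rstep1 : (∫ t in (0:ℝ)..x, (x - t) ^ (γ - 1) *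
        (γ * deriv (hDens γ) t + t * deriv (deriv (hDens γ)) t))
      = ∫ t in (0:ℝ)..x, (x-t)^(γ-1) * (γ * YY.h1 γ t + t * YY.h2 γ t) := by
    apply intervalIntegral.integral_congr_ae
    apply Filter.Eventually.of_forall
    intro t ht
    rw [Set.uIoc_of_le hx0.le] at ht
    have htIoo : t ∈ Set.Ioo (0:ℝ) 1 := ⟨ht.1, lt_of_le_of_lt ht.2 hx1⟩
    rw [YY.deriv_hDens_eq hγ0 hγ1 htIoo, YY.deriv2_hDens_eq hγ0 hγ1 htIoo]
  have rstep2 : (x • ∫ s in (0:ℝ)..1, (x - x*s)^(γ-1) *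
        (γ * YY.h1 γ (x*s) + (x*s) * YY.h2 γ (x*s)))
      = ∫ t in (0:ℝ)..x, (x-t)^(γ-1) * (γ * YY.h1 γ t + t * YY.h2 γ t) := by
    have := intervalIntegral.smul_integral_comp_mul_left (a := 0) (b := 1)
      (fun t => (x-t)^(γ-1) * (γ * YY.h1 γ t + t * YY.h2 γ t)) x
    simpa using this
  have rstep3 : ∫ s in (0:ℝ)..1, (x - x*s)^(γ-1) *
        (γ * YY.h1 γ (x*s) + (x*s) * YY.h2 γ (x*s))
      = ∫ s in (0:ℝ)..1, x^(γ-1) * (γ * ((1-s)^(γ-1) * YY.h1 γ (x*s))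
          + x * ((1-s)^(γ-1) * (YY.h2 γ (x*s) * s))) := by
    apply intervalIntegral.integral_congr
    intro s hs
    rw [Set.uIcc_of_le (by norm_num : (0:ℝ) ≤ 1)] at hs
    have hrw : x - x*s = x * (1-s) := by ring
    beta_reduce
    rw [hrw, Real.mul_rpow hx0.le (by linarith [hs.2] : (0:ℝ) ≤ 1-s)]
    ring
  have rstep4 : ∫ s in (0:ℝ)..1, x^(γ-1) * (γ * ((1-s)^(γ-1) * YY.h1 γ (x*s))
          + x * ((1-s)^(γ-1) * (YY.h2 γ (x*s) * s)))
      = x^(γ-1) * (γ * (∫ s in (0:ℝ)..1, (1-s)^(γ-1) * YY.h1 γ (x*s))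
          + x * ∫ s in (0:ℝ)..1, (1-s)^(γ-1) * (YY.h2 γ (x*s) * s)) := by
    rw [intervalIntegral.integral_const_mul]
    congr 1
    rw [intervalIntegral.integral_add (hFx_int.const_mul γ) (hFi'.const_mul x),
      intervalIntegral.integral_const_mul, intervalIntegral.integral_const_mul]
  rw [rstep1, ← rstep2, rstep3, rstep4, smul_eq_mul]
  have hxγ : x^γ = x^(γ-1) * x := by
    conv_lhs => rw [show γ = (γ-1)+1 by ring]
    exact Real.rpow_add_one hx0.ne' (γ-1)
  rw [hxγ]
  field_simp
  rw [show (fun s : ℝ => (1 - s) ^ (γ - 1) * YY.h1 γ (s * x))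
      = fun s => (1 - s) ^ (γ - 1) * YY.h1 γ (x * s) from funext fun s => by ring_nf]
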